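/- arXiv:1902.08237 — 2 statements merged into one kernel-verified Lean document; each statement's English description precedes it below -/
import Mathlib

section
/- Let q be a complex number. There exist constants L > 0, N ∈ ℝ, and R > 0 such that |m - i q| ≥ L(1+ℓ)^N for all half-integers ℓ ≥ R and all m with -ℓ ≤ m ≤ ℓ and ℓ - m ∈ ℕ, if and only if q ∉ (i/2)ℤ. -/
open Complex

/-- Global hypoellipticity of `∂₀ + q` on `S³`: there are constants `L > 0`, `N ∈ ℝ`,
`R > 0` with `|m - i q| ≥ L (1+ℓ)^N` for all half-integers `ℓ ≥ R` and all `m` with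
`-ℓ ≤ m ≤ ℓ`, `ℓ - m ∈ ℕ`, if and only if `q ∉ (i/2)ℤ`. -/
theorem gh_neutral_operator_sphere (q : ℂ) :
    (∃ L : ℝ, 0 < L ∧ ∃ N : ℝ, ∃ R : ℝ, 0 < R ∧
      ∀ ℓ m : ℝ, (∃ n : ℕ, ℓ = n / 2) → R ≤ ℓ → -ℓ ≤ m → m ≤ ℓ →
        (∃ k : ℕ, ℓ - m = k) →
        L * (1 + ℓ) ^ N ≤ ‖(m : ℂ) - Complex.I * q‖) ↔
    ¬ ∃ k : ℤ, q = Complex.I * (k : ℂ) / 2 := by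
  constructor
  · rintro ⟨L, hL, N, R, hR, hbound⟩ ⟨k, rfl⟩
    set c : ℕ := ⌈R⌉₊ with hc
    set ℓ : ℝ := ((k.natAbs : ℝ) + 2 * c) / 2 with hℓ
    set m : ℝ := -(k : ℝ) / 2 with hm
    have habs : ((k.natAbs : ℕ) : ℝ) = |(k : ℝ)| := by
      rw [Nat.cast_natAbs]; push_cast; ring
    obtain ⟨t, ht⟩ : ∃ t : ℕ, (k.natAbs : ℤ) + k = 2 * t := ⟨k.toNat, by omega⟩
    have hcast : (k.natAbs : ℝ) + (k : ℝ) = 2 * (t : ℝ) := by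
      have h2 := congrArg (fun z : ℤ => (z : ℝ)) ht
      push_cast at h2
      rw [habs]; exact h2
    have hkabs : -((k.natAbs : ℝ)) ≤ (k : ℝ) ∧ (k : ℝ) ≤ (k.natAbs : ℝ) := by
      rw [habs]; exact ⟨neg_abs_le _, le_abs_self _⟩
    have hcR : R ≤ (c : ℝ) := Nat.le_ceil R
    have hnn : (0 : ℝ) ≤ (k.natAbs : ℝ) := Nat.cast_nonneg _
    have hRℓ : R ≤ ℓ := by rw [hℓ]; linarith
    have h := hbound ℓ m ⟨k.natAbs + 2 * c, by rw [hℓ]; push_cast; ring⟩ hRℓ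
      (by rw [hℓ, hm]; linarith [hkabs.1]) (by rw [hℓ, hm]; linarith [hkabs.2])
      ⟨t + c, by rw [hℓ, hm]; push_cast; linarith [hcast]⟩
    have hz : ((m : ℂ) - Complex.I * (Complex.I * (k : ℂ) / 2)) = 0 := by
      have h1 : Complex.I * (Complex.I * (k : ℂ) / 2) = -(k : ℂ) / 2 := by
        rw [show Complex.I * (Complex.I * (k : ℂ) / 2)
            = Complex.I * Complex.I * ((k : ℂ) / 2) by ring, Complex.I_mul_I]
        ring
      rw [h1, hm]; push_cast; ring
    rw [hz] at h
    simp only [norm_zero] at h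
    have hpos : 0 < L * (1 + ℓ) ^ N := by
      apply mul_pos hL
      exact Real.rpow_pos_of_pos (by linarith) N
    linarith
  · intro hq
    rcases eq_or_ne q.re 0 with ha | ha
    · -- q = b i with 2b not an integer
      set b : ℝ := q.im with hb
      have hbnot : ∀ z : ℤ, 2 * b ≠ (z : ℝ) := by
        intro z hz
        apply hq
        refine ⟨z, ?_⟩
        apply Complex.ext
        · simp [ha]
        · simp only [Complex.div_im, Complex.mul_im, Complex.I_re, Complex.I_im,
            Complex.intCast_re, Complex.intCast_im]
          simp [Complex.normSq]
          linarith
      set L : ℝ := |2 * b - round (2 * b)| / 2 with hLdef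
      have hLpos : 0 < L := by
        rw [hLdef]
        have : 2 * b - (round (2 * b) : ℝ) ≠ 0 := by
          intro h0
          exact hbnot (round (2 * b)) (by linarith)
        positivity
      refine ⟨L, hLpos, 0, 1, one_pos, ?_⟩
      intro ℓ m ⟨n, hn⟩ _ _ _ ⟨k, hk⟩
      rw [Real.rpow_zero, mul_one]
      have h2m : (2 : ℝ) * m = ((n : ℤ) - 2 * (k : ℤ) : ℤ) := by
        push_cast
        rw [hn] at hk
        linarith
      have hge : L ≤ |m + b| := by
        have h1 : |2 * b - round (2 * b)| ≤ |2 * b - (-((n : ℤ) - 2 * (k : ℤ)) : ℤ)| :=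
          round_le (2 * b) _
        have h2 : |2 * b - (-((n : ℤ) - 2 * (k : ℤ)) : ℤ)| = 2 * |m + b| := by
          push_cast
          rw [show 2 * b - -((n : ℝ) - 2 * k) = 2 * (m + b) by push_cast at h2m; linarith,
            abs_mul]
          simp
        rw [hLdef]
        rw [h2] at h1
        linarith
      have hre : ((m : ℂ) - Complex.I * q).re = m + b := by
        simp [Complex.sub_re, Complex.mul_re, hb]
      calc L ≤ |m + b| := hge
        _ = |((m : ℂ) - Complex.I * q).re| := by rw [hre]
        _ ≤ ‖(m : ℂ) - Complex.I * q‖ := Complex.abs_re_le_norm _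
    · -- q.re ≠ 0
      refine ⟨|q.re|, abs_pos.mpr ha, 0, 1, one_pos, ?_⟩
      intro ℓ m _ _ _ _ _
      rw [Real.rpow_zero, mul_one]
      have him : ((m : ℂ) - Complex.I * q).im = -q.re := by
        simp [Complex.sub_im, Complex.mul_im]
      calc |q.re| = |((m : ℂ) - Complex.I * q).im| := by rw [him, abs_neg]
        _ ≤ ‖(m : ℂ) - Complex.I * q‖ := Complex.abs_im_le_norm _
end

section
/- Let c be an irrational real number. The following are equivalent: (i) there exist constants C > 0, N ∈ ℝ, and R > 0 such that |ξ + cη| ≥ C(1 + |ξ| + |η|)^N for all (ξ, η) ∈ ℤ² with |ξ| + |η| ≥ R; (ii) c is not a Liouville number, i.e., there exist C' > 0 and K > 0 such that |c - p/q| ≥ C' q^{-K} for all integers p and all integers q ≥ 1. -/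
/-- For irrational real `c`, the Diophantine lower bound
`|ξ + cη| ≥ C(1+|ξ|+|η|)^N` for large `|ξ|+|η|` holds iff `c` is not a Liouville
number, i.e. `|c - p/q| ≥ C' q^{-K}` for all integers `p` and all `q ≥ 1`. -/
theorem torus_GH_iff_not_liouville (c : ℝ) (hc : Irrational c) :
    (∃ C : ℝ, 0 < C ∧ ∃ N : ℝ, ∃ R : ℝ, 0 < R ∧
        ∀ ξ η : ℤ, R ≤ (|ξ| : ℝ) + (|η| : ℝ) →
          C * ((1 : ℝ) + |ξ| + |η|) ^ N ≤ |(ξ : ℝ) + c * (η : ℝ)|) ↔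
    (∃ C' : ℝ, 0 < C' ∧ ∃ K : ℝ, 0 < K ∧
        ∀ p q : ℤ, 1 ≤ q → C' * (q : ℝ) ^ (-K) ≤ |c - (p : ℝ) / (q : ℝ)|) := by
  constructor
  · intro hyp
    obtain ⟨C, hC, N, R, hR, h⟩ := hyp
    simp only [Int.cast_abs] at h
    set N' : ℝ := min N 0 with hN'def
    have hN'0 : N' ≤ 0 := min_le_right _ _
    have h' : ∀ ξ η : ℤ, R ≤ |(ξ:ℝ)| + |(η:ℝ)| →
        C * ((1 : ℝ) + |(ξ:ℝ)| + |(η:ℝ)|) ^ N' ≤ |(ξ : ℝ) + c * (η : ℝ)| := by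
      intro ξ η hr
      have h1 : (1:ℝ) ≤ 1 + |(ξ:ℝ)| + |(η:ℝ)| := by
        have h2 : (0:ℝ) ≤ |(ξ:ℝ)| := abs_nonneg _
        have h3 : (0:ℝ) ≤ |(η:ℝ)| := abs_nonneg _
        linarith
      have h2 : ((1:ℝ) + |(ξ:ℝ)| + |(η:ℝ)|) ^ N' ≤ ((1:ℝ) + |(ξ:ℝ)| + |(η:ℝ)|) ^ N :=
        Real.rpow_le_rpow_of_exponent_le h1 (min_le_left _ _)
      exact le_trans (mul_le_mul_of_nonneg_left h2 hC.le) (h ξ η hr)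
    set M : ℤ := ⌈R⌉ with hM
    have hM1 : 1 ≤ M := by
      have := Int.ceil_pos.mpr hR; omega
    set S : Finset (ℤ × ℤ) := (Finset.Icc (-M) M) ×ˢ (Finset.Icc 1 M) with hS
    have hne : S.Nonempty := ⟨(0, 1), by
      simp only [hS, Finset.mem_product, Finset.mem_Icc]; omega⟩
    set δ : ℝ := S.inf' hne (fun x => |c - (x.1:ℝ)/(x.2:ℝ)|) with hδdef
    have hδpos : 0 < δ := by
      rw [hδdef, Finset.lt_inf'_iff]
      intro x hx
      rw [abs_pos, sub_ne_zero]
      intro hcx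
      exact hc ⟨(x.1:ℚ)/(x.2:ℚ), by push_cast; exact hcx.symm⟩
    have hcpos : (0:ℝ) < (|c| + 4) ^ N' := Real.rpow_pos_of_pos (by positivity) _
    refine ⟨min (min (C * (|c| + 4) ^ N') δ) 1, by positivity, 1 - N', by linarith, ?_⟩
    intro p q hq
    set C' : ℝ := min (min (C * (|c| + 4) ^ N') δ) 1 with hC'def
    have hC'pos : 0 < C' := by positivity
    have hqR : (1:ℝ) ≤ (q:ℝ) := by exact_mod_cast hq
    have hq0 : (0:ℝ) < (q:ℝ) := by linarith
    have hqK : (q:ℝ) ^ (-(1 - N')) ≤ 1 :=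
      Real.rpow_le_one_of_one_le_of_nonpos hqR (by linarith)
    have hqKpos : (0:ℝ) < (q:ℝ) ^ (-(1 - N')) := Real.rpow_pos_of_pos hq0 _
    have hc0 : (0:ℝ) ≤ |c| := abs_nonneg c
    have hp0 : (0:ℝ) ≤ |(p:ℝ)| := abs_nonneg _
    rcases lt_or_ge (|(p:ℝ)| + (q:ℝ)) R with hsmall | hbig
    · -- small case: use δ
      have hpM : |p| ≤ M := by
        have h5 : |(p:ℝ)| ≤ (M:ℝ) := le_trans (by linarith) (Int.le_ceil R)
        exact_mod_cast h5
      have hqM : q ≤ M := by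
        have h5 : ((q:ℤ):ℝ) ≤ (M:ℝ) := le_trans (by linarith) (Int.le_ceil R)
        exact_mod_cast h5
      have hmem : (p, q) ∈ S := by
        simp only [hS, Finset.mem_product, Finset.mem_Icc]
        exact ⟨abs_le.mp hpM, hq, hqM⟩
      have hδle : δ ≤ |c - (p:ℝ)/(q:ℝ)| := Finset.inf'_le _ hmem
      calc C' * (q:ℝ) ^ (-(1 - N')) ≤ δ * 1 :=
            mul_le_mul (le_trans (min_le_left _ _) (min_le_right _ _)) hqK hqKpos.le hδpos.le
        _ ≤ |c - (p:ℝ)/(q:ℝ)| := by rw [mul_one]; exact hδle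
    · rcases lt_or_ge ((|c| + 2) * (q:ℝ)) (|(p:ℝ)|) with hbigp | hsmallp
      · -- |p| huge: trivial bound
        have hpq : (|c| + 2) < |(p:ℝ)| / (q:ℝ) := by
          rw [lt_div_iff₀ hq0]; linarith
        have h2 := abs_sub_abs_le_abs_sub ((p:ℝ)/(q:ℝ)) c
        rw [abs_sub_comm ((p:ℝ)/(q:ℝ)) c] at h2
        have e : |(p:ℝ)/(q:ℝ)| = |(p:ℝ)|/(q:ℝ) := by
          rw [abs_div, abs_of_pos hq0]
        rw [e] at h2
        calc C' * (q:ℝ) ^ (-(1 - N')) ≤ 1 * 1 :=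
              mul_le_mul (min_le_right _ _) hqK hqKpos.le (by norm_num)
          _ ≤ |c - (p:ℝ)/(q:ℝ)| := by rw [one_mul]; linarith
      · -- main case: apply h' with ξ = -p, η = q
        have key := h' (-p) q (by
          push_cast
          rw [abs_neg, abs_of_pos hq0]
          linarith)
        push_cast at key
        rw [abs_neg, abs_of_pos hq0] at key
        have eabs : |(-(p:ℝ)) + c * (q : ℝ)| = (q:ℝ) * |c - (p:ℝ)/(q:ℝ)| := by
          have e3 : (-(p:ℝ)) + c * (q : ℝ) = (q:ℝ) * (c - (p:ℝ)/(q:ℝ)) := by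
            field_simp
            ring
          rw [e3, abs_mul, abs_of_pos hq0]
        rw [eabs] at key
        have hbase : (1:ℝ) + |(p:ℝ)| + (q:ℝ) ≤ (|c| + 4) * (q:ℝ) := by nlinarith
        have hbasepos : (0:ℝ) < (1:ℝ) + |(p:ℝ)| + (q:ℝ) := by linarith
        have hpow : ((|c| + 4) * (q:ℝ)) ^ N' ≤ ((1:ℝ) + |(p:ℝ)| + (q:ℝ)) ^ N' :=
          Real.rpow_le_rpow_of_nonpos hbasepos hbase hN'0
        have hmulpow : ((|c| + 4) * (q:ℝ)) ^ N' = (|c| + 4) ^ N' * (q:ℝ) ^ N' :=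
          Real.mul_rpow (by positivity) hq0.le
        have hqexp : (q:ℝ) ^ N' = (q:ℝ) * (q:ℝ) ^ (-(1 - N')) := by
          have e2 : (q:ℝ) * (q:ℝ) ^ (-(1 - N')) = (q:ℝ) ^ ((1:ℝ) + -(1 - N')) := by
            rw [Real.rpow_add hq0, Real.rpow_one]
          rw [e2]
          congr 1
          ring
        have chain : C * ((|c| + 4) ^ N' * ((q:ℝ) * (q:ℝ) ^ (-(1 - N')))) ≤
            (q:ℝ) * |c - (p:ℝ)/(q:ℝ)| := by
          calc C * ((|c| + 4) ^ N' * ((q:ℝ) * (q:ℝ) ^ (-(1 - N'))))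
              = C * (((|c| + 4) * (q:ℝ)) ^ N') := by rw [hmulpow, hqexp]
            _ ≤ C * (((1:ℝ) + |(p:ℝ)| + (q:ℝ)) ^ N') := mul_le_mul_of_nonneg_left hpow hC.le
            _ ≤ (q:ℝ) * |c - (p:ℝ)/(q:ℝ)| := key
        have final : C * (|c| + 4) ^ N' * (q:ℝ) ^ (-(1 - N')) ≤ |c - (p:ℝ)/(q:ℝ)| := by
          rw [← mul_le_mul_iff_right₀ hq0]
          calc (q:ℝ) * (C * (|c| + 4) ^ N' * (q:ℝ) ^ (-(1 - N')))
              = C * ((|c| + 4) ^ N' * ((q:ℝ) * (q:ℝ) ^ (-(1 - N')))) := by ring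
            _ ≤ (q:ℝ) * |c - (p:ℝ)/(q:ℝ)| := chain
        calc C' * (q:ℝ) ^ (-(1 - N')) ≤ C * (|c| + 4) ^ N' * (q:ℝ) ^ (-(1 - N')) :=
              mul_le_mul_of_nonneg_right
                (le_trans (min_le_left _ _) (min_le_left _ _)) hqKpos.le
          _ ≤ |c - (p:ℝ)/(q:ℝ)| := final
  · intro h
    obtain ⟨C', hC', K, hK, h⟩ := h
    refine ⟨min C' 1, by positivity, -K, |c| + 2, by positivity, ?_⟩
    intro ξ η hr
    push_cast at hr ⊢
    set A : ℝ := |(ξ:ℝ)| with hA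
    set B : ℝ := |(η:ℝ)| with hB
    have hA0 : 0 ≤ A := abs_nonneg _
    have hB0 : 0 ≤ B := abs_nonneg _
    have h1 : (1:ℝ) ≤ 1 + A + B := by linarith
    have hc0 : (0:ℝ) ≤ |c| := abs_nonneg c
    have hpow1 : ((1:ℝ) + A + B) ^ (-K) ≤ 1 :=
      Real.rpow_le_one_of_one_le_of_nonpos h1 (by linarith)
    rcases le_or_gt A ((|c| + 1) * B) with hcase | hcase
    · -- small ξ case: use the Diophantine hypothesis
      have hBpos : 0 < B := by nlinarith
      have hη : η ≠ 0 := by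
        intro hh; apply absurd hBpos; rw [hB, hh]; norm_num
      have hηR : ((η:ℝ)) ≠ 0 := Int.cast_ne_zero.mpr hη
      have hB1 : 1 ≤ B := by
        have h2 : (1:ℤ) ≤ |η| := Int.one_le_abs hη
        have h3 : ((1:ℤ):ℝ) ≤ ((|η|:ℤ):ℝ) := by exact_mod_cast h2
        rw [hB]; push_cast at h3; linarith
      have key : C' * B ^ (-K) ≤ |c + (ξ:ℝ)/(η:ℝ)| := by
        rcases lt_or_gt_of_ne hη with hneg | hpos
        · have hh := h ξ (-η) (by omega)
          have e1 : ((-η : ℤ) : ℝ) = -(η:ℝ) := by push_cast; ring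
          rw [e1] at hh
          rw [div_neg, sub_neg_eq_add] at hh
          have eB : B = -(η:ℝ) := by
            rw [hB, abs_of_neg (by exact_mod_cast hneg : (η:ℝ) < 0)]
          rw [eB]; exact hh
        · have hh := h (-ξ) η (by omega)
          have e1 : ((-ξ : ℤ) : ℝ) = -(ξ:ℝ) := by push_cast; ring
          rw [e1] at hh
          have e2 : c - (-(ξ:ℝ))/(η:ℝ) = c + (ξ:ℝ)/(η:ℝ) := by ring
          rw [e2] at hh
          have eB : B = (η:ℝ) := by
            rw [hB, abs_of_pos (by exact_mod_cast hpos : (0:ℝ) < (η:ℝ))]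
          rw [eB]; exact hh
      have eabs : |(ξ : ℝ) + c * (η : ℝ)| = B * |c + (ξ:ℝ)/(η:ℝ)| := by
        rw [hB, ← abs_mul]
        congr 1
        field_simp
        ring
      rw [eabs]
      have hpowB : 0 < B ^ (-K) := Real.rpow_pos_of_pos hBpos _
      have step1 : min C' 1 * ((1:ℝ) + A + B) ^ (-K) ≤ C' * B ^ (-K) := by
        have h4 : ((1:ℝ) + A + B) ^ (-K) ≤ B ^ (-K) :=
          Real.rpow_le_rpow_of_nonpos hBpos (by linarith) (by linarith)
        have h3 : (0:ℝ) ≤ ((1:ℝ) + A + B) ^ (-K) := by positivity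
        calc min C' 1 * ((1:ℝ) + A + B) ^ (-K) ≤ C' * ((1:ℝ) + A + B) ^ (-K) :=
              mul_le_mul_of_nonneg_right (min_le_left _ _) h3
          _ ≤ C' * B ^ (-K) := mul_le_mul_of_nonneg_left h4 hC'.le
      calc min C' 1 * ((1:ℝ) + A + B) ^ (-K) ≤ C' * B ^ (-K) := step1
        _ ≤ B * (C' * B ^ (-K)) := le_mul_of_one_le_left (by positivity) hB1
        _ ≤ B * |c + (ξ:ℝ)/(η:ℝ)| := mul_le_mul_of_nonneg_left key (by linarith)
    · -- large ξ case: trivial lower bound 1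
      have habs : A - |c| * B ≤ |(ξ : ℝ) + c * (η : ℝ)| := by
        have h2 := abs_sub_abs_le_abs_sub (ξ:ℝ) (-(c*(η:ℝ)))
        rw [abs_neg, sub_neg_eq_add, abs_mul] at h2
        rw [hA, hB]; linarith
      have hge1 : (1:ℝ) ≤ A - |c| * B := by
        nlinarith [mul_le_mul_of_nonneg_left hcase.le hc0,
          mul_le_mul_of_nonneg_left hr (by positivity : (0:ℝ) ≤ |c|+1)]
      calc min C' 1 * ((1:ℝ) + A + B) ^ (-K) ≤ 1 * 1 :=
            mul_le_mul (min_le_right _ _) hpow1 (by positivity) (by norm_num)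
        _ ≤ |(ξ : ℝ) + c * (η : ℝ)| := by rw [one_mul]; linarith
end
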